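/- Let P be an induced-hereditary graph property, let G be a P-strict graph, and let G' ∈ P be a graph with G ≤ G'. Then G' is P-strict and dec_P(G) ≥ dec_P(G'). -/

import Mathlib

/-!  Common framework: finite simple graphs on finite subsets of `ℕ`,
graph properties, `(P₁,…,Pₙ)`-partitions, products of properties,
`P`-decompositions, strict graphs, decomposability numbers, generating
sets, *-joins of copies, and the respecting notions from the paper. -/

/-- A finite simple graph on a finite vertex set of natural numbers. -/
structure SGraph where
  verts : Finset ℕ
  Adj : ℕ → ℕ → Prop
  symm : ∀ a b, Adj a b → Adj b a
  loopless : ∀ a, ¬Adj a a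
  mem_of_adj : ∀ a b, Adj a b → a ∈ verts ∧ b ∈ verts

/-- The null graph `K₀` (no vertices). -/
def nullGraph : SGraph where
  verts := ∅
  Adj _ _ := False
  symm _ _ h := h.elim
  loopless _ h := h
  mem_of_adj _ _ h := h.elim

namespace SGraph

/-- The subgraph of `G` induced by the vertex set `U`. -/
def induce (G : SGraph) (U : Finset ℕ) : SGraph where
  verts := G.verts ∩ U
  Adj a b := G.Adj a b ∧ a ∈ U ∧ b ∈ U
  symm a b h := ⟨G.symm a b h.1, h.2.2, h.2.1⟩
  loopless a h := G.loopless a h.1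
  mem_of_adj a b h := ⟨Finset.mem_inter.2 ⟨(G.mem_of_adj a b h.1).1, h.2.1⟩,
    Finset.mem_inter.2 ⟨(G.mem_of_adj a b h.1).2, h.2.2⟩⟩

/-- `φ` is an isomorphism from `G` onto `H`. -/
def IsoVia (G H : SGraph) (φ : ℕ → ℕ) : Prop :=
  Set.BijOn φ (G.verts : Set ℕ) (H.verts : Set ℕ) ∧
    ∀ a ∈ G.verts, ∀ b ∈ G.verts, (G.Adj a b ↔ H.Adj (φ a) (φ b))

/-- `G` and `H` are isomorphic. -/
def Iso (G H : SGraph) : Prop := ∃ φ, G.IsoVia H φ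

/-- `H ≤ G` : `H` is isomorphic to an induced subgraph of `G`. -/
def Le (H G : SGraph) : Prop := ∃ U ⊆ G.verts, H.Iso (G.induce U)

end SGraph

/-- `K` is the disjoint union of the family `C` of graphs. -/
def IsDisjUnion {k : ℕ} (K : SGraph) (C : Fin k → SGraph) : Prop :=
  (∀ i j, i ≠ j → Disjoint (C i).verts (C j).verts) ∧
  K.verts = Finset.univ.biUnion (fun j => (C j).verts) ∧
  ∀ a b, K.Adj a b ↔ ∃ j, (C j).Adj a b

/-- `kG₀` : the set of graphs that are disjoint unions of `k` copies of `G₀`. -/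
def kCopies (k : ℕ) (G₀ : SGraph) : Set SGraph :=
  {K | ∃ C : Fin k → SGraph, (∀ j, (C j).Iso G₀) ∧ IsDisjUnion K C}

/-- The *-join `G₁ * ⋯ * Gₙ` of a family of graphs (with pairwise disjoint
vertex sets): all graphs on the union of the vertex sets inducing each `Gᵢ`,
so that only edges joining distinct `Gᵢ`'s may be added. -/
def StarJoin {n : ℕ} (Gs : Fin n → SGraph) : Set SGraph :=
  {H | H.verts = Finset.univ.biUnion (fun i => (Gs i).verts) ∧
    ∀ i, ∀ a ∈ (Gs i).verts, ∀ b ∈ (Gs i).verts, (H.Adj a b ↔ (Gs i).Adj a b)}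

/-- `G * K₁` : the graphs obtained from `G` by adding one new vertex joined
arbitrarily to `G`. -/
def joinOne (G : SGraph) : Set SGraph :=
  {H | ∃ v, v ∉ G.verts ∧ H.verts = insert v G.verts ∧
    ∀ a ∈ G.verts, ∀ b ∈ G.verts, (H.Adj a b ↔ G.Adj a b)}

/-- A graph property: a nonempty isomorphism-closed class of graphs (it
contains the null graph, which by convention belongs to every property, and
some graph with at least one vertex). -/
def IsProperty (P : Set SGraph) : Prop :=
  nullGraph ∈ P ∧ (∃ G ∈ P, G.verts.Nonempty) ∧
    ∀ G H, SGraph.Iso G H → G ∈ P → H ∈ P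

/-- `P` is induced-hereditary. -/
def IndHer (P : Set SGraph) : Prop := ∀ G H, G ∈ P → SGraph.Le H G → H ∈ P

/-- `P` is additive: closed under disjoint unions. -/
def Additive' (P : Set SGraph) : Prop :=
  ∀ G H K : SGraph, G ∈ P → H ∈ P → IsDisjUnion K ![G, H] → K ∈ P

/-- An additive induced-hereditary graph property. -/
def IsAIH (P : Set SGraph) : Prop := IsProperty P ∧ IndHer P ∧ Additive' P

/-- A `(P₁,…,Pₙ)`-partition of `G` (parts may be empty). -/
def IsPartitionInto {n : ℕ} (Ps : Fin n → Set SGraph) (G : SGraph)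
    (V : Fin n → Finset ℕ) : Prop :=
  (∀ i j, i ≠ j → Disjoint (V i) (V j)) ∧
  Finset.univ.biUnion V = G.verts ∧
  ∀ i, G.induce (V i) ∈ Ps i

/-- The product `P₁ ∘ ⋯ ∘ Pₙ` of properties. -/
def ProdProp {n : ℕ} (Ps : Fin n → Set SGraph) : Set SGraph :=
  {G | ∃ V : Fin n → Finset ℕ, IsPartitionInto Ps G V}

/-- A `P`-decomposition of `G` with parts `V` : the parts are nonempty and
partition `V(G)`, and for every `k ≥ 1` every graph in
`kG[V₁] * ⋯ * kG[Vₙ]` belongs to `P`. -/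
def IsDecomp (P : Set SGraph) (G : SGraph) {n : ℕ} (V : Fin n → Finset ℕ) : Prop :=
  (∀ i, (V i).Nonempty) ∧
  (∀ i j, i ≠ j → Disjoint (V i) (V j)) ∧
  Finset.univ.biUnion V = G.verts ∧
  ∀ k : ℕ, 0 < k → ∀ A : Fin n → SGraph,
    (∀ i, A i ∈ kCopies k (G.induce (V i))) →
    (∀ i j, i ≠ j → Disjoint (A i).verts (A j).verts) →
    ∀ H ∈ StarJoin A, H ∈ P

/-- `dec_P(G)` : the maximum number of parts of a `P`-decomposition of `G`
(`0` if there is none). -/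
noncomputable def decP (P : Set SGraph) (G : SGraph) : ℕ :=
  sSup {n | ∃ V : Fin n → Finset ℕ, IsDecomp P G V}

/-- `G` is `P`-strict : `G ∈ P` but some graph in `G * K₁` is not in `P`. -/
def Strict (P : Set SGraph) (G : SGraph) : Prop :=
  G ∈ P ∧ ∃ H ∈ joinOne G, H ∉ P

/-- `dec(P) = min { dec_P(G) : G ∈ S(P) }`. -/
noncomputable def decOf (P : Set SGraph) : ℕ :=
  sInf (decP P '' {G | Strict P G})

/-- `dec_P(𝒢) = min { dec_P(G) : G ∈ 𝒢 }`. -/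
noncomputable def decSet (P 𝒢 : Set SGraph) : ℕ := sInf (decP P '' 𝒢)

/-- `⟨𝒢⟩` : the induced-hereditary property generated by `𝒢`. -/
def gen (𝒢 : Set SGraph) : Set SGraph := {G | ∃ H ∈ 𝒢, SGraph.Le G H}

/-- `𝒢` is a generating set for `P`. -/
def Generates (𝒢 P : Set SGraph) : Prop := gen 𝒢 = P

/-- `G` is uniquely `P`-decomposable: it has exactly one `P`-decomposition
(as an unordered partition) with `dec_P(G)` parts. -/
def UniquelyDecomposable (P : Set SGraph) (G : SGraph) : Prop :=
  (∃ V : Fin (decP P G) → Finset ℕ, IsDecomp P G V) ∧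
  ∀ V W : Fin (decP P G) → Finset ℕ, IsDecomp P G V → IsDecomp P G W →
    ∃ σ : Equiv.Perm (Fin (decP P G)), ∀ i, W i = V (σ i)

/-- Data exhibiting `Gstar` as a member of `s ⊛ G` : `s` pairwise disjoint
copies of `G` (given by isomorphisms) whose *-join contains `Gstar`. -/
structure CopyJoin (G : SGraph) (s : ℕ) (Gstar : SGraph) where
  copies : Fin s → SGraph
  maps : Fin s → ℕ → ℕ
  iso : ∀ k, G.IsoVia (copies k) (maps k)
  disj : ∀ k l, k ≠ l → Disjoint (copies k).verts (copies l).verts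
  mem : Gstar ∈ StarJoin copies

/-- `Gstar ∈ s ⊛ G` respects `d₀ = (U₁,…,Uₘ)` : every added edge between two
different copies of `G` meets (copies of) two different `Uⱼ`'s, i.e. there is
no edge between the copies of the same `Uⱼ` in two different copies of `G`. -/
def CopyJoin.RespectsJoin {G : SGraph} {s : ℕ} {Gstar : SGraph}
    (cj : CopyJoin G s Gstar) {m : ℕ} (U : Fin m → Finset ℕ) : Prop :=
  ∀ k l : Fin s, k ≠ l → ∀ j : Fin m, ∀ a ∈ (U j).image (cj.maps k),
    ∀ b ∈ (U j).image (cj.maps l), ¬Gstar.Adj a b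

/-- A partition `V` of `Gstar ∈ s ⊛ G` respects `d₀ = (U₁,…,Uₘ)` uniformly:
for each part `Vᵢ` there is a single `Uⱼ` such that in every copy `Gᵏ`,
`Vᵢ ∩ V(Gᵏ)` is contained in the copy of `Uⱼ`. -/
def CopyJoin.RespectsUniformly {G : SGraph} {s : ℕ} {Gstar : SGraph}
    (cj : CopyJoin G s Gstar) {n m : ℕ}
    (V : Fin n → Finset ℕ) (U : Fin m → Finset ℕ) : Prop :=
  ∀ i, ∃ j, ∀ k, V i ∩ (cj.copies k).verts ⊆ (U j).image (cj.maps k)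

/-- An irreducible additive induced-hereditary property: one that is not the
product of two additive induced-hereditary properties. -/
def IrredProp (P : Set SGraph) : Prop :=
  IsAIH P ∧ ¬∃ Q R : Set SGraph, IsAIH Q ∧ IsAIH R ∧ P = ProdProp ![Q, R]


/-!
Fix an embedding `ψ` of `G` into `G'` and a graph `H ∈ G * K₁` outside `P`, with new vertex `v`.
Attaching a fresh vertex to `G'` exactly as `v` is attached to `G` (through `ψ`) gives a graph in
`G' * K₁` containing `H` as an induced subgraph, hence outside `P`.

A `P`-decomposition of `G'` pulls back along `ψ` to a partition of `G` with the same number of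
parts. A *-join of copies of the pulled-back parts is an induced subgraph of a *-join of copies
of the original parts (complete every copy with fresh vertices), so it lies in `P`. No
pulled-back part is empty: otherwise `v` could be placed in that part of `G'`, which makes `H`
itself such a *-join, and `H ∉ P`.
-/
namespace SGraph

open Finset

theorem ext {G H : SGraph} (hverts : G.verts = H.verts)
    (hadj : ∀ a b, G.Adj a b ↔ H.Adj a b) : G = H := by
  obtain ⟨V, A, _, _, _⟩ := G
  obtain ⟨W, B, _, _, _⟩ := H
  obtain rfl : V = W := hverts
  obtain rfl : A = B := funext₂ fun a b => propext (hadj a b)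
  rfl

@[simp]
theorem induce_verts (G : SGraph) (U : Finset ℕ) : (G.induce U).verts = G.verts ∩ U := rfl

@[simp]
theorem induce_adj (G : SGraph) (U : Finset ℕ) (a b : ℕ) :
    (G.induce U).Adj a b ↔ G.Adj a b ∧ a ∈ U ∧ b ∈ U := Iff.rfl

def EmbedVia (G H : SGraph) (φ : ℕ → ℕ) : Prop :=
  Set.MapsTo φ (G.verts : Set ℕ) (H.verts : Set ℕ) ∧ Set.InjOn φ (G.verts : Set ℕ) ∧
    ∀ a ∈ G.verts, ∀ b ∈ G.verts, (G.Adj a b ↔ H.Adj (φ a) (φ b))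

theorem embedVia_id {G H : SGraph} (hsub : G.verts ⊆ H.verts)
    (hadj : ∀ a ∈ G.verts, ∀ b ∈ G.verts, (G.Adj a b ↔ H.Adj a b)) : G.EmbedVia H id :=
  ⟨fun _ ha => hsub ha, Set.injOn_id _, hadj⟩

theorem EmbedVia.comp {G H K : SGraph} {φ χ : ℕ → ℕ} (h₁ : G.EmbedVia H φ)
    (h₂ : H.EmbedVia K χ) : G.EmbedVia K (χ ∘ φ) :=
  ⟨h₂.1.comp h₁.1, h₂.2.1.comp h₁.2.1 h₁.1,
    fun a ha b hb => (h₁.2.2 a ha b hb).trans (h₂.2.2 _ (h₁.1 ha) _ (h₁.1 hb))⟩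

theorem EmbedVia.induce {G H : SGraph} {φ : ℕ → ℕ} (h : G.EmbedVia H φ) {S T : Finset ℕ}
    (hST : ∀ a ∈ S, φ a ∈ T) : (G.induce S).EmbedVia (H.induce T) φ := by
  refine ⟨fun a ha => ?_, h.2.1.mono fun a ha => (mem_inter.1 ha).1, fun a ha b hb => ?_⟩
  · obtain ⟨haG, haS⟩ := mem_inter.1 ha
    exact mem_inter.2 ⟨h.1 haG, hST a haS⟩
  · obtain ⟨haG, haS⟩ := mem_inter.1 ha
    obtain ⟨hbG, hbS⟩ := mem_inter.1 hb
    simp only [induce_adj, h.2.2 a haG b hbG, haS, hbS, hST a haS, hST b hbS]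

theorem le_iff_exists_embedVia {H G : SGraph} : H.Le G ↔ ∃ φ, H.EmbedVia G φ := by
  constructor
  · rintro ⟨U, -, φ, hbij, hadj⟩
    have hmem : ∀ a ∈ H.verts, φ a ∈ G.verts ∧ φ a ∈ U := fun a ha =>
      mem_inter.1 (hbij.mapsTo ha)
    refine ⟨φ, fun a ha => (hmem a ha).1, hbij.injOn, fun a ha b hb => ?_⟩
    simp only [hadj a ha b hb, induce_adj, (hmem a ha).2, (hmem b hb).2, and_true]
  · rintro ⟨φ, hmaps, hinj, hadj⟩
    have himage : H.verts.image φ ⊆ G.verts := by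
      intro y hy
      obtain ⟨a, ha, rfl⟩ := mem_image.1 hy
      exact hmaps ha
    refine ⟨H.verts.image φ, himage, φ, ⟨?_, hinj, ?_⟩, fun a ha b hb => ?_⟩
    · intro a ha
      simp only [induce_verts, inter_eq_right.2 himage, coe_image]
      exact Set.mem_image_of_mem φ ha
    · intro y hy
      simp only [induce_verts, inter_eq_right.2 himage, coe_image] at hy
      exact hy
    · simp only [hadj a ha b hb, induce_adj, mem_image_of_mem φ ha, mem_image_of_mem φ hb,
        and_true]

theorem IsoVia.symm {G H : SGraph} {φ : ℕ → ℕ} (h : G.IsoVia H φ) :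
    H.IsoVia G (Function.invFunOn φ G.verts) := by
  obtain ⟨hbij, hadj⟩ := h
  have hinv := hbij.invOn_invFunOn
  have hbij' := Set.BijOn.symm hinv.symm hbij
  refine ⟨hbij', fun a ha b hb => ?_⟩
  have := hadj _ (hbij'.mapsTo ha) _ (hbij'.mapsTo hb)
  rwa [hinv.2 ha, hinv.2 hb, Iff.comm] at this

theorem IsoVia.embedVia {G H : SGraph} {φ : ℕ → ℕ} (h : G.IsoVia H φ) : G.EmbedVia H φ :=
  ⟨h.1.mapsTo, h.1.injOn, h.2⟩

theorem Iso.le {G H : SGraph} (h : G.Iso H) : G.Le H :=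
  le_iff_exists_embedVia.2 (h.imp fun _ hφ => hφ.embedVia)

theorem Le.trans {G H K : SGraph} (h₁ : G.Le H) (h₂ : H.Le K) : G.Le K := by
  obtain ⟨φ, hφ⟩ := le_iff_exists_embedVia.1 h₁
  obtain ⟨χ, hχ⟩ := le_iff_exists_embedVia.1 h₂
  exact le_iff_exists_embedVia.2 ⟨_, hφ.comp hχ⟩

theorem le_of_verts_subset_singleton {G K : SGraph} {v w : ℕ} (hv : G.verts ⊆ {v})
    (hw : w ∈ K.verts) : G.Le K := by
  refine le_iff_exists_embedVia.2 ⟨fun _ => w, fun _ _ => hw, fun a ha b hb _ => ?_,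
    fun a ha b hb => ?_⟩
  · rw [mem_singleton.1 (hv ha), mem_singleton.1 (hv hb)]
  · rw [mem_singleton.1 (hv ha), mem_singleton.1 (hv hb)]
    exact iff_of_false (G.loopless v) (K.loopless w)

def mapGraph (G : SGraph) (f : ℕ → ℕ) : SGraph where
  verts := G.verts.image f
  Adj x y := x ≠ y ∧ ∃ a b, G.Adj a b ∧ f a = x ∧ f b = y
  symm _ _ h := by
    obtain ⟨hne, a, b, hab, ha, hb⟩ := h
    exact ⟨hne.symm, b, a, G.symm _ _ hab, hb, ha⟩
  loopless _ h := h.1 rfl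
  mem_of_adj _ _ h := by
    obtain ⟨-, a, b, hab, rfl, rfl⟩ := h
    obtain ⟨ha, hb⟩ := G.mem_of_adj _ _ hab
    exact ⟨mem_image_of_mem f ha, mem_image_of_mem f hb⟩

theorem isoVia_mapGraph {G : SGraph} {f : ℕ → ℕ} (hf : Set.InjOn f G.verts) :
    G.IsoVia (G.mapGraph f) f := by
  refine ⟨⟨fun a ha => mem_image_of_mem f ha, hf, fun y hy => ?_⟩, fun a ha b hb => ⟨?_, ?_⟩⟩
  · obtain ⟨a, ha, rfl⟩ := mem_image.1 hy
    exact ⟨a, ha, rfl⟩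
  · intro h
    refine ⟨fun he => G.loopless a ?_, a, b, h, rfl, rfl⟩
    rwa [hf ha hb he] at h ⊢
  · rintro ⟨-, a', b', hab, ha', hb'⟩
    obtain ⟨ha'G, hb'G⟩ := G.mem_of_adj _ _ hab
    rwa [← hf ha'G ha ha', ← hf hb'G hb hb']

def sup (G H : SGraph) : SGraph where
  verts := G.verts ∪ H.verts
  Adj a b := G.Adj a b ∨ H.Adj a b
  symm a b h := h.imp (G.symm a b) (H.symm a b)
  loopless a h := h.elim (G.loopless a) (H.loopless a)
  mem_of_adj a b h := h.elim
    (fun h => ⟨mem_union_left _ (G.mem_of_adj a b h).1, mem_union_left _ (G.mem_of_adj a b h).2⟩)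
    (fun h => ⟨mem_union_right _ (H.mem_of_adj a b h).1, mem_union_right _ (H.mem_of_adj a b h).2⟩)

theorem embedVia_sup_left {G H : SGraph}
    (h : ∀ a ∈ G.verts, ∀ b ∈ G.verts, H.Adj a b → G.Adj a b) : G.EmbedVia (G.sup H) id :=
  embedVia_id subset_union_left fun a ha b hb => ⟨Or.inl, fun h' => h'.elim id (h a ha b hb)⟩

theorem embedVia_sup_right {G H : SGraph}
    (h : ∀ a ∈ H.verts, ∀ b ∈ H.verts, G.Adj a b → H.Adj a b) : H.EmbedVia (G.sup H) id :=
  embedVia_id subset_union_right fun a ha b hb => ⟨Or.inr, fun h' => h'.elim (h a ha b hb) id⟩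

end SGraph

open Finset SGraph

def unionGraph {k : ℕ} (D : Fin k → SGraph) : SGraph where
  verts := univ.biUnion fun j => (D j).verts
  Adj a b := ∃ j, (D j).Adj a b
  symm _ _ h := h.imp fun j => (D j).symm _ _
  loopless a h := by
    obtain ⟨j, hj⟩ := h
    exact (D j).loopless a hj
  mem_of_adj a b h := by
    obtain ⟨j, hj⟩ := h
    obtain ⟨ha, hb⟩ := (D j).mem_of_adj _ _ hj
    exact ⟨mem_biUnion.2 ⟨j, mem_univ _, ha⟩, mem_biUnion.2 ⟨j, mem_univ _, hb⟩⟩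

theorem isDisjUnion_unionGraph {k : ℕ} {D : Fin k → SGraph}
    (h : ∀ i j, i ≠ j → Disjoint (D i).verts (D j).verts) : IsDisjUnion (unionGraph D) D :=
  ⟨h, rfl, fun _ _ => Iff.rfl⟩

theorem IsDisjUnion.mem_verts {k : ℕ} {K : SGraph} {C : Fin k → SGraph} (h : IsDisjUnion K C)
    {j : Fin k} {a : ℕ} (ha : a ∈ (C j).verts) : a ∈ K.verts :=
  h.2.1 ▸ mem_biUnion.2 ⟨j, mem_univ _, ha⟩

theorem IsDisjUnion.embedVia_id_mono {k : ℕ} {K K' : SGraph} {C C' : Fin k → SGraph}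
    (hK : IsDisjUnion K C) (hK' : IsDisjUnion K' C') (hCC' : ∀ j, (C j).EmbedVia (C' j) id) :
    K.EmbedVia K' id := by
  have hpart : ∀ a ∈ K.verts, ∃ p, a ∈ (C p).verts := fun a ha => by
    rw [hK.2.1] at ha
    obtain ⟨p, -, hp⟩ := mem_biUnion.1 ha
    exact ⟨p, hp⟩
  have hloc : ∀ j, ∀ a ∈ K.verts, a ∈ (C' j).verts → a ∈ (C j).verts := by
    intro j a ha ha'
    obtain ⟨p, hp⟩ := hpart a ha
    obtain rfl : p = j := by
      by_contra hpj
      exact disjoint_left.1 (hK'.1 p j hpj) ((hCC' p).1 hp) ha'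
    exact hp
  refine embedVia_id (fun a ha => ?_) fun a ha b hb => ?_
  · obtain ⟨p, hp⟩ := hpart a ha
    exact hK'.mem_verts ((hCC' p).1 hp)
  · rw [hK.2.2, hK'.2.2]
    constructor
    · rintro ⟨j, h⟩
      obtain ⟨haj, hbj⟩ := (C j).mem_of_adj a b h
      exact ⟨j, ((hCC' j).2.2 a haj b hbj).1 h⟩
    · rintro ⟨j, h⟩
      obtain ⟨haj, hbj⟩ := (C' j).mem_of_adj a b h
      exact ⟨j, ((hCC' j).2.2 a (hloc j a ha haj) b (hloc j b hb hbj)).2 h⟩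

theorem self_mem_kCopies_one (G : SGraph) : G ∈ kCopies 1 G := by
  refine ⟨fun _ => G, fun _ => ⟨id, Set.bijOn_id _, fun _ _ _ _ => Iff.rfl⟩,
    fun i j hij => absurd (Subsingleton.elim i j) hij, by simp, fun a b => ?_⟩
  exact ⟨fun h => ⟨0, h⟩, fun ⟨_, h⟩ => h⟩

theorem mem_starJoin_induce {n : ℕ} (G : SGraph) {W : Fin n → Finset ℕ}
    (hW : G.verts ⊆ univ.biUnion W) : G ∈ StarJoin fun i => G.induce (W i) := by
  refine ⟨?_, fun i a ha b hb => ?_⟩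
  · ext a
    simp only [mem_biUnion, mem_univ, true_and, induce_verts, mem_inter]
    refine ⟨fun ha => ?_, fun ⟨_, ha, _⟩ => ha⟩
    obtain ⟨i, -, hi⟩ := mem_biUnion.1 (hW ha)
    exact ⟨i, ha, hi⟩
  · rw [induce_verts, mem_inter] at ha hb
    simp [ha.2, hb.2]

theorem SGraph.Le.exists_iso_extension {C G₁ : SGraph} (hle : C.Le G₁) {e : ℕ → ℕ}
    (he : e.Injective) (hfresh : ∀ b, e b ∉ C.verts) :
    ∃ C' : SGraph, C'.Iso G₁ ∧ C.EmbedVia C' id ∧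
      ∀ x ∈ C'.verts, x ∈ C.verts ∨ x ∈ Set.range e := by
  obtain ⟨φ, hφ⟩ := le_iff_exists_embedVia.1 hle
  have hχ : ∀ a ∈ C.verts, Function.invFunOn φ C.verts (φ a) = a := fun a ha =>
    hφ.2.1.leftInvOn_invFunOn ha
  set σ : ℕ → ℕ := fun y =>
    if y ∈ C.verts.image φ then Function.invFunOn φ C.verts y else e y with hσ
  have hσφ : ∀ a ∈ C.verts, σ (φ a) = a := fun a ha => by
    simp only [hσ, if_pos (mem_image_of_mem φ ha), hχ a ha]
  have hσ_cases : ∀ y, (∃ a ∈ C.verts, y = φ a ∧ σ y = a) ∨ σ y = e y := by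
    intro y
    by_cases hy : y ∈ C.verts.image φ
    · obtain ⟨a, ha, rfl⟩ := mem_image.1 hy
      exact Or.inl ⟨a, ha, rfl, hσφ a ha⟩
    · exact Or.inr (if_neg hy)
  have hσinj : Set.InjOn σ G₁.verts := by
    intro y₁ _ y₂ _ h
    rcases hσ_cases y₁ with ⟨a₁, ha₁, rfl, h₁⟩ | h₁ <;>
      rcases hσ_cases y₂ with ⟨a₂, ha₂, rfl, h₂⟩ | h₂
    · rw [← h₁, ← h₂, h]
    · exact absurd (by rw [← h₂, ← h, h₁]; exact ha₁) (hfresh y₂)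
    · exact absurd (by rw [← h₁, h, h₂]; exact ha₂) (hfresh y₁)
    · exact he (h₁ ▸ h₂ ▸ h)
  have hiso := isoVia_mapGraph hσinj
  refine ⟨G₁.mapGraph σ, ⟨_, hiso.symm⟩, embedVia_id (fun a ha => ?_) fun a ha b hb => ?_,
    fun x hx => ?_⟩
  · exact mem_image.2 ⟨φ a, hφ.1 ha, hσφ a ha⟩
  · rw [hφ.2.2 a ha b hb, hiso.2 _ (hφ.1 ha) _ (hφ.1 hb), hσφ a ha, hσφ b hb]
  · obtain ⟨y, -, rfl⟩ := mem_image.1 hx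
    rcases hσ_cases y with ⟨a, ha, -, h⟩ | h
    · exact Or.inl (h ▸ ha)
    · exact Or.inr ⟨y, h.symm⟩

theorem exists_kCopies_extension {F G₁ K : SGraph} {k : ℕ} (hle : F.Le G₁)
    (hK : K ∈ kCopies k F) {e : ℕ → ℕ} (he : e.Injective) (hfresh : ∀ b, e b ∉ K.verts) :
    ∃ K' ∈ kCopies k G₁, K.EmbedVia K' id ∧ ∀ x ∈ K'.verts, x ∈ K.verts ∨ x ∈ Set.range e := by
  obtain ⟨C, hCiso, hKC⟩ := hK
  -- `Nat.pair j` keeps the fresh vertices of different copies apart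
  have hext : ∀ j : Fin k, ∃ C' : SGraph, C'.Iso G₁ ∧ (C j).EmbedVia C' id ∧
      ∀ x ∈ C'.verts, x ∈ (C j).verts ∨ x ∈ Set.range (e ∘ Nat.pair j) := fun j =>
    ((hCiso j).le.trans hle).exists_iso_extension
      (he.comp fun b b' h => (Nat.pair_eq_pair.1 h).2) fun b hb => hfresh _ (hKC.mem_verts hb)
  choose C' hC'iso hCC' hC'new using hext
  have hdisj : ∀ j l, j ≠ l → Disjoint (C' j).verts (C' l).verts := by
    intro j l hjl
    refine disjoint_left.2 fun x hxj hxl => ?_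
    rcases hC'new j x hxj with hx | ⟨b, rfl⟩ <;> rcases hC'new l _ hxl with hx' | ⟨b', hb'⟩
    · exact disjoint_left.1 (hKC.1 j l hjl) hx hx'
    · exact hfresh _ (hb' ▸ hKC.mem_verts hx)
    · exact hfresh _ (hKC.mem_verts hx')
    · exact hjl (Fin.ext (Nat.pair_eq_pair.1 (he hb')).1.symm)
  refine ⟨unionGraph C', ⟨C', hC'iso, isDisjUnion_unionGraph hdisj⟩,
    hKC.embedVia_id_mono (isDisjUnion_unionGraph hdisj) hCC', fun x hx => ?_⟩
  obtain ⟨j, -, hxj⟩ := mem_biUnion.1 hx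
  exact (hC'new j x hxj).imp hKC.mem_verts fun ⟨b, hb⟩ => ⟨_, hb⟩

theorem exists_starJoin_extension {n : ℕ} {A B : Fin n → SGraph}
    (hAB : ∀ i, (A i).EmbedVia (B i) id) (hB : ∀ i j, i ≠ j → Disjoint (B i).verts (B j).verts)
    {H : SGraph} (hH : H ∈ StarJoin A) : ∃ H' ∈ StarJoin B, H.EmbedVia H' id := by
  have hpart : ∀ a ∈ H.verts, ∃ p, a ∈ (A p).verts := fun a ha => by
    rw [hH.1] at ha
    obtain ⟨p, -, hp⟩ := mem_biUnion.1 ha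
    exact ⟨p, hp⟩
  have hagree : ∀ i, ∀ a ∈ H.verts, ∀ b ∈ H.verts, a ∈ (B i).verts → b ∈ (B i).verts →
      (H.Adj a b ↔ (B i).Adj a b) := by
    have hloc : ∀ i, ∀ a ∈ H.verts, a ∈ (B i).verts → a ∈ (A i).verts := by
      intro i a ha hai
      obtain ⟨p, hp⟩ := hpart a ha
      obtain rfl : p = i := by
        by_contra hpi
        exact disjoint_left.1 (hB p i hpi) ((hAB p).1 hp) hai
      exact hp
    intro i a ha b hb hai hbi
    exact (hH.2 i a (hloc i a ha hai) b (hloc i b hb hbi)).trans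
      ((hAB i).2.2 a (hloc i a ha hai) b (hloc i b hb hbi))
  have hsub : H.verts ⊆ (unionGraph B).verts := fun a ha => by
    obtain ⟨p, hp⟩ := hpart a ha
    exact mem_biUnion.2 ⟨p, mem_univ _, (hAB p).1 hp⟩
  refine ⟨(unionGraph B).sup H,
    ⟨union_eq_left.2 hsub, fun i a ha b hb => ⟨?_, fun h => Or.inl ⟨i, h⟩⟩⟩,
    embedVia_sup_right fun a ha b hb => ?_⟩
  · rintro (⟨j, h⟩ | h)
    · obtain rfl : j = i := by
        by_contra hji
        exact disjoint_left.1 (hB j i hji) ((B j).mem_of_adj a b h).1 ha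
      exact h
    · obtain ⟨ha', hb'⟩ := H.mem_of_adj a b h
      exact (hagree i a ha' b hb' ha hb).1 h
  · rintro ⟨j, h⟩
    obtain ⟨haj, hbj⟩ := (B j).mem_of_adj a b h
    exact (hagree j a ha b hb haj hbj).2 h

/-- Every copy of `F i` extends, by fresh vertices, to a copy of the whole part `G'[V' i]`, and
`H` is an induced subgraph of a *-join of these extended copies. -/
theorem IsDecomp.mem_of_mem_starJoin {P : Set SGraph} (hher : IndHer P) {G' : SGraph} {n : ℕ}
    {V' : Fin n → Finset ℕ} (hdec : IsDecomp P G' V') {F : Fin n → SGraph}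
    (hF : ∀ i, (F i).Le (G'.induce (V' i))) {k : ℕ} (hk : 0 < k) {A : Fin n → SGraph}
    (hA : ∀ i, A i ∈ kCopies k (F i)) (hAdisj : ∀ i j, i ≠ j → Disjoint (A i).verts (A j).verts)
    {H : SGraph} (hH : H ∈ StarJoin A) : H ∈ P := by
  set N := H.verts.sup id + 1
  have hN : ∀ a ∈ H.verts, a < N := fun a ha => Nat.lt_succ_of_le (le_sup (f := id) ha)
  have hAH : ∀ i, ∀ a ∈ (A i).verts, a ∈ H.verts := fun i a ha =>
    hH.1 ▸ mem_biUnion.2 ⟨i, mem_univ _, ha⟩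
  -- labels `≥ N` are fresh for `H`, and `Nat.pair i` keeps the parts apart
  have hext : ∀ i, ∃ B ∈ kCopies k (G'.induce (V' i)), (A i).EmbedVia B id ∧
      ∀ x ∈ B.verts, x ∈ (A i).verts ∨ x ∈ Set.range fun b => N + Nat.pair i b := fun i =>
    exists_kCopies_extension (hF i) (hA i)
      (fun b b' h => (Nat.pair_eq_pair.1 (Nat.add_left_cancel h)).2)
      fun b hb => (hN _ (hAH i _ hb)).not_ge (Nat.le_add_right _ _)
  choose B hB hAB hBnew using hext
  have hBdisj : ∀ i j, i ≠ j → Disjoint (B i).verts (B j).verts := by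
    intro i j hij
    refine disjoint_left.2 fun x hxi hxj => ?_
    rcases hBnew i x hxi with hx | ⟨b, rfl⟩ <;> rcases hBnew j _ hxj with hx' | ⟨b', hb'⟩
    · exact disjoint_left.1 (hAdisj i j hij) hx hx'
    · exact (hN _ (hAH i _ hx)).not_ge (hb' ▸ Nat.le_add_right _ _)
    · exact (hN _ (hAH j _ hx')).not_ge (Nat.le_add_right _ _)
    · exact hij (Fin.ext (Nat.pair_eq_pair.1 (Nat.add_left_cancel hb')).1.symm)
  obtain ⟨H', hH', hHH'⟩ := exists_starJoin_extension hAB hBdisj hH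
  exact hher H' H (hdec.2.2.2 k hk B hB hBdisj H' hH') (le_iff_exists_embedVia.2 ⟨id, hHH'⟩)

theorem SGraph.embedVia_id_of_mem_joinOne {G H : SGraph} (hH : H ∈ joinOne G) :
    G.EmbedVia H id := by
  obtain ⟨v, -, hHv, hadj⟩ := hH
  exact embedVia_id (hHv ▸ subset_insert v G.verts) fun a ha b hb => (hadj a ha b hb).symm

theorem SGraph.induce_eq_of_embedVia_id {G H : SGraph} (h : G.EmbedVia H id) {S : Finset ℕ}
    (hS : S ⊆ G.verts) : H.induce S = G.induce S := by
  refine SGraph.ext ?_ fun a b => ?_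
  · rw [induce_verts, induce_verts, inter_eq_right.2 hS,
      inter_eq_right.2 (hS.trans fun a ha => h.1 ha)]
  · simp only [induce_adj]
    exact ⟨fun ⟨hab, ha, hb⟩ => ⟨(h.2.2 a (hS ha) b (hS hb)).2 hab, ha, hb⟩,
      fun ⟨hab, ha, hb⟩ => ⟨(h.2.2 a (hS ha) b (hS hb)).1 hab, ha, hb⟩⟩

theorem SGraph.EmbedVia.injOn_update {G G' : SGraph} {ψ : ℕ → ℕ} (hψ : G.EmbedVia G' ψ)
    {v x : ℕ} (hv : v ∉ G.verts) (hx : x ∉ G'.verts) :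
    Set.InjOn (Function.update ψ v x) (insert v G.verts : Finset ℕ) := by
  have hψσ : Set.EqOn ψ (Function.update ψ v x) G.verts := fun a ha =>
    (Function.update_of_ne (ne_of_mem_of_not_mem ha hv) _ _).symm
  rw [coe_insert, Set.injOn_insert (by exact_mod_cast hv)]
  refine ⟨hψ.2.1.congr hψσ, ?_⟩
  rintro ⟨a, ha, hax⟩
  rw [← hψσ ha, Function.update_self] at hax
  exact hx (hax ▸ hψ.1 ha)

theorem SGraph.Le.exists_joinOne_le {G G' H : SGraph} (hle : G.Le G') (hH : H ∈ joinOne G) :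
    ∃ H' ∈ joinOne G', H.Le H' := by
  obtain ⟨ψ, hψ⟩ := le_iff_exists_embedVia.1 hle
  obtain ⟨v, hv, hHv, hHadj⟩ := hH
  set x := G'.verts.sup id + 1
  have hx : x ∉ G'.verts := fun hx => (le_sup (f := id) hx).not_gt (Nat.lt_succ_self _)
  set σ := Function.update ψ v x
  have hσG : ∀ a ∈ G.verts, σ a = ψ a := fun a ha =>
    Function.update_of_ne (ne_of_mem_of_not_mem ha hv) _ _
  have hσv : σ v = x := Function.update_self ..
  have hM := isoVia_mapGraph (hHv ▸ hψ.injOn_update hv hx)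
  have hcompat : ∀ a ∈ H.verts, ∀ b ∈ H.verts, σ a ∈ G'.verts → σ b ∈ G'.verts →
      (G'.Adj (σ a) (σ b) ↔ (H.mapGraph σ).Adj (σ a) (σ b)) := by
    have hback : ∀ a ∈ H.verts, σ a ∈ G'.verts → a ∈ G.verts := fun a ha hσa =>
      (mem_insert.1 (hHv ▸ ha)).resolve_left fun hav => hx (by rwa [hav, hσv] at hσa)
    intro a ha b hb hσa hσb
    have haG := hback a ha hσa
    have hbG := hback b hb hσb
    rw [← hM.2 a ha b hb, hHadj a haG b hbG, hψ.2.2 a haG b hbG, hσG a haG, hσG b hbG]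
  refine ⟨G'.sup (H.mapGraph σ), ⟨x, hx, ?_, fun a ha b hb => ?_⟩,
    le_iff_exists_embedVia.2 ⟨_, hM.embedVia.comp (embedVia_sup_right fun a ha b hb h => ?_)⟩⟩
  · have himage : G.verts.image σ ⊆ G'.verts := fun y hy => by
      obtain ⟨a, ha, rfl⟩ := mem_image.1 hy
      exact hσG a ha ▸ hψ.1 ha
    change G'.verts ∪ H.verts.image σ = _
    rw [hHv, image_insert, hσv, union_insert, union_eq_left.2 himage]
  · refine ((embedVia_sup_left fun a ha b hb h => ?_).2.2 a ha b hb).symm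
    obtain ⟨ha', hb'⟩ := (H.mapGraph σ).mem_of_adj a b h
    obtain ⟨c, hc, rfl⟩ := mem_image.1 ha'
    obtain ⟨d, hd, rfl⟩ := mem_image.1 hb'
    exact (hcompat c hc d hd ha hb).2 h
  · obtain ⟨c, hc, rfl⟩ := mem_image.1 ha
    obtain ⟨d, hd, rfl⟩ := mem_image.1 hb
    obtain ⟨hc', hd'⟩ := G'.mem_of_adj _ _ h
    exact (hcompat c hc d hd hc' hd').1 h

theorem Strict.of_le {P : Set SGraph} (hher : IndHer P) {G G' : SGraph} (hG : Strict P G)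
    (hG' : G' ∈ P) (hle : G.Le G') : Strict P G' := by
  obtain ⟨-, H, hH, hHP⟩ := hG
  obtain ⟨H', hH', hHH'⟩ := hle.exists_joinOne_le hH
  exact ⟨hG', H', hH', fun hH'P => hHP (hher H' H hH'P hHH')⟩

def comapParts (G : SGraph) (ψ : ℕ → ℕ) {n : ℕ} (V' : Fin n → Finset ℕ) (i : Fin n) :
    Finset ℕ :=
  G.verts.filter fun a => ψ a ∈ V' i

@[simp]
theorem mem_comapParts {G : SGraph} {ψ : ℕ → ℕ} {n : ℕ} {V' : Fin n → Finset ℕ} {i : Fin n}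
    {a : ℕ} : a ∈ comapParts G ψ V' i ↔ a ∈ G.verts ∧ ψ a ∈ V' i :=
  mem_filter

theorem disjoint_update_singleton {n : ℕ} {V : Fin n → Finset ℕ}
    (hV : ∀ j l, j ≠ l → Disjoint (V j) (V l)) {v : ℕ} (hv : ∀ j, v ∉ V j) (i : Fin n)
    {j l : Fin n} (hjl : j ≠ l) :
    Disjoint (Function.update V i {v} j) (Function.update V i {v} l) := by
  simp only [Function.update_apply]
  split_ifs with hj hl hl
  · exact absurd (hj.trans hl.symm) hjl
  · exact disjoint_singleton_left.2 (hv l)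
  · exact disjoint_singleton_right.2 (hv j)
  · exact hV j l hjl

section Decomp

variable {P : Set SGraph} {G G' : SGraph} {ψ : ℕ → ℕ} {n : ℕ} {V' : Fin n → Finset ℕ}

theorem IsDecomp.exists_mem (hdec : IsDecomp P G' V') {a : ℕ} (ha : a ∈ G'.verts) :
    ∃ p, a ∈ V' p := by
  rw [← hdec.2.2.1] at ha
  obtain ⟨p, -, hp⟩ := mem_biUnion.1 ha
  exact ⟨p, hp⟩

theorem IsDecomp.disjoint_comapParts (hdec : IsDecomp P G' V') {i j : Fin n} (hij : i ≠ j) :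
    Disjoint (comapParts G ψ V' i) (comapParts G ψ V' j) :=
  disjoint_filter.2 fun _ _ hi hj => disjoint_left.1 (hdec.2.1 i j hij) hi hj

/-- A part of `G'` missing the copy of `G` could host the extra vertex of a graph in `G * K₁`
outside `P`, and that graph would then be a *-join of subgraphs of the parts. -/
theorem IsDecomp.comapParts_nonempty (hher : IndHer P) (hG : Strict P G)
    (hψ : G.EmbedVia G' ψ) (hdec : IsDecomp P G' V') (i : Fin n) :
    (comapParts G ψ V' i).Nonempty := by
  by_contra hempty
  rw [not_nonempty_iff_eq_empty] at hempty
  obtain ⟨-, H, hH, hHP⟩ := hG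
  have hGH := embedVia_id_of_mem_joinOne hH
  obtain ⟨v, hv, hHv, -⟩ := hH
  obtain ⟨w, hw⟩ := hdec.1 i
  set W := Function.update (comapParts G ψ V') i {v}
  have hWi : W i = {v} := Function.update_self ..
  have hWj : ∀ j ≠ i, W j = comapParts G ψ V' j := fun j hj => Function.update_of_ne hj _ _
  have hWdisj : ∀ j l, j ≠ l → Disjoint (W j) (W l) := fun j l hjl =>
    disjoint_update_singleton (fun _ _ => hdec.disjoint_comapParts)
      (fun _ h => hv (mem_comapParts.1 h).1) i hjl
  have hcover : H.verts ⊆ univ.biUnion W := by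
    intro a ha
    rcases mem_insert.1 (hHv ▸ ha) with rfl | ha
    · exact mem_biUnion.2 ⟨i, mem_univ _, hWi ▸ mem_singleton_self _⟩
    obtain ⟨p, hp⟩ := hdec.exists_mem (hψ.1 ha)
    have hpi : p ≠ i := by
      rintro rfl
      exact notMem_empty a (hempty ▸ mem_comapParts.2 ⟨ha, hp⟩)
    exact mem_biUnion.2 ⟨p, mem_univ _, hWj p hpi ▸ mem_comapParts.2 ⟨ha, hp⟩⟩
  refine hHP (hdec.mem_of_mem_starJoin hher (fun j => ?_) one_pos
    (fun j => self_mem_kCopies_one _)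
    (fun j l hjl => (hWdisj j l hjl).mono inter_subset_right inter_subset_right)
    (mem_starJoin_induce H hcover))
  by_cases hj : j = i
  · subst hj
    have hvj : (H.induce (W j)).verts ⊆ {v} := hWi ▸ inter_subset_right
    have hwj : w ∈ (G'.induce (V' j)).verts :=
      mem_inter.2 ⟨hdec.2.2.1 ▸ mem_biUnion.2 ⟨j, mem_univ _, hw⟩, hw⟩
    exact le_of_verts_subset_singleton hvj hwj
  · rw [hWj j hj,
      induce_eq_of_embedVia_id hGH fun a ha => (mem_comapParts.1 ha).1]
    exact le_iff_exists_embedVia.2 ⟨ψ, hψ.induce fun a ha => (mem_comapParts.1 ha).2⟩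

theorem IsDecomp.comap (hher : IndHer P) (hG : Strict P G) (hψ : G.EmbedVia G' ψ)
    (hdec : IsDecomp P G' V') : IsDecomp P G (comapParts G ψ V') := by
  refine ⟨hdec.comapParts_nonempty hher hG hψ, fun i j hij => hdec.disjoint_comapParts hij,
    ?_, fun k hk A hA hAdisj H hH => hdec.mem_of_mem_starJoin hher
      (fun i => le_iff_exists_embedVia.2 ⟨ψ, hψ.induce fun a ha => (mem_comapParts.1 ha).2⟩)
      hk hA hAdisj hH⟩
  ext a
  simp only [mem_biUnion, mem_univ, true_and, mem_comapParts]
  refine ⟨fun ⟨_, ha, _⟩ => ha, fun ha => ?_⟩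
  obtain ⟨p, hp⟩ := hdec.exists_mem (hψ.1 ha)
  exact ⟨p, ha, hp⟩

theorem IsDecomp.le_card {V : Fin n → Finset ℕ} (h : IsDecomp P G V) : n ≤ G.verts.card := by
  obtain ⟨hne, hdisj, hcov, -⟩ := h
  calc n = ∑ _i : Fin n, 1 := by simp
    _ ≤ ∑ i, (V i).card := sum_le_sum fun i _ => (hne i).card_pos
    _ = (univ.biUnion V).card := (card_biUnion fun i _ j _ hij => hdisj i j hij).symm
    _ = G.verts.card := by rw [hcov]

theorem decP_le_decP_of_le (hher : IndHer P) (hG : Strict P G) (hle : G.Le G') :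
    decP P G' ≤ decP P G := by
  obtain ⟨ψ, hψ⟩ := le_iff_exists_embedVia.1 hle
  refine csSup_le_csSup' ⟨G.verts.card, ?_⟩ ?_
  · rintro m ⟨V, hV⟩
    exact hV.le_card
  · rintro m ⟨V', hV'⟩
    exact ⟨_, hV'.comap hher hG hψ⟩

end Decomp

theorem statement3_general (P : Set SGraph) (hher : IndHer P)
    (G G' : SGraph) (hG : Strict P G) (hG' : G' ∈ P) (hle : SGraph.Le G G') :
    Strict P G' ∧ decP P G' ≤ decP P G :=
  ⟨hG.of_le hher hG' hle, decP_le_decP_of_le hher hG hle⟩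

theorem statement3 (P : Set SGraph) (hP : IsProperty P) (hher : IndHer P)
    (G G' : SGraph) (hG : Strict P G) (hG' : G' ∈ P) (hle : SGraph.Le G G') :
    Strict P G' ∧ decP P G' ≤ decP P G :=
  statement3_general P hher G G' hG hG' hle
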